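/- arXiv:1503.01194 — 2 statements merged into one kernel-verified Lean document; each statement's English description precedes it below -/
import Mathlib

section
/- In the group ring ℚ[GL₄(ℤ)], with P = [[1,0,0,0],[-1,1,0,0],[0,-1,1,0],[0,0,-1,1]], S = [[1,0,0,0],[0,1,0,0],[0,0,1,0],[-1,-1,-1,1]], Ψ = I + [[1,0,0,0],[0,1,0,0],[0,0,1,1],[0,0,0,-1]] + [[1,0,0,0],[0,1,1,1],[0,0,-1,-1],[0,0,1,0]] + [[1,1,1,1],[0,-1,-1,-1],[0,1,0,0],[0,0,1,0]], and sh(3,4) = e+(34)+(234)+(1234) (permutations as permutation matrices), one has P · sh(3,4) · (E₃⊕I₁) = Ψ·S, where E₃ = [[1,0,0],[1,1,0],[1,1,1]] and E₃⊕I₁ is the block diagonal 4×4 matrix. -/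
/-- 4×4 integer matrices. -/
abbrev M4 : Type := Matrix (Fin 4) (Fin 4) ℤ
/-- The ℚ-algebra spanned freely by 4×4 integer matrices (containing the group
ring ℚ[GL₄(ℤ)] as the span of the invertible matrices). -/
abbrev QM4 : Type := MonoidAlgebra ℚ M4
/-- The canonical embedding of a matrix into the monoid algebra. -/
noncomputable def emb (M : M4) : QM4 := MonoidAlgebra.single M 1
/-- Permutation matrix `(δ_{i σ(j)})` of `σ ∈ S₄`. -/
def pm (σ : Equiv.Perm (Fin 4)) : M4 := Matrix.of fun i j => if i = σ j then 1 else 0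
/-- The shuffle element sh(2,4) = ∑_{σ(1)<σ(2), σ(3)<σ(4)} σ. -/
noncomputable def sh24 : QM4 :=
  ∑ σ ∈ Finset.univ.filter (fun σ : Equiv.Perm (Fin 4) => σ 0 < σ 1 ∧ σ 2 < σ 3), emb (pm σ)
/-- The element Φ. -/
noncomputable def Phi : QM4 :=
  emb 1 + emb !![1,0,0,0; 0,1,1,0; 0,0,-1,0; 0,0,1,1]
    + emb !![1,1,1,0; 0,-1,-1,0; 0,1,0,0; 0,0,1,1]
/-- The element Ψ. -/
noncomputable def Psi : QM4 :=
  emb 1 + emb !![1,0,0,0; 0,1,0,0; 0,0,1,1; 0,0,0,-1]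
    + emb !![1,0,0,0; 0,1,1,1; 0,0,-1,-1; 0,0,1,0]
    + emb !![1,1,1,1; 0,-1,-1,-1; 0,1,0,0; 0,0,1,0]
/-- The 4-cycle (1234): 1↦2↦3↦4↦1 (on Fin 4: 0↦1↦2↦3↦0). -/
def c1234 : Equiv.Perm (Fin 4) := Equiv.swap 0 1 * Equiv.swap 1 2 * Equiv.swap 2 3
/-- The 3-cycle (234) (on Fin 4: 1↦2↦3↦1). -/
def c234 : Equiv.Perm (Fin 4) := Equiv.swap 1 2 * Equiv.swap 2 3

/-!
Both sides are sums of four basis elements of the monoid algebra, and the identity holds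
summand by summand: `P · σ · (E₃ ⊕ I₁) = Ψ_σ · S` for `σ = e, (34), (234), (1234)`, where
`Ψ_σ` runs through the four summands of `Ψ`. Each of these is a finite check of a product
of 4×4 integer matrices.
-/

local notation "matP" => (!![1,0,0,0; -1,1,0,0; 0,-1,1,0; 0,0,-1,1] : M4)
local notation "matE" => (!![1,0,0,0; 1,1,0,0; 1,1,1,0; 0,0,0,1] : M4)
local notation "matS" => (!![1,0,0,0; 0,1,0,0; 0,0,1,0; -1,-1,-1,1] : M4)

theorem emb_mul (A B : M4) : emb (A * B) = emb A * emb B := by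
  rw [emb, emb, emb, MonoidAlgebra.single_mul_single, one_mul]

theorem matP_mul_matE : matP * matE = matS := by decide

theorem matP_mul_pm_swap_mul_matE :
    matP * pm (Equiv.swap 2 3) * matE = !![1,0,0,0; 0,1,0,0; 0,0,1,1; 0,0,0,-1] * matS := by
  decide

theorem matP_mul_pm_c234_mul_matE :
    matP * pm c234 * matE = !![1,0,0,0; 0,1,1,1; 0,0,-1,-1; 0,0,1,0] * matS := by
  decide

theorem matP_mul_pm_c1234_mul_matE :
    matP * pm c1234 * matE = !![1,1,1,1; 0,-1,-1,-1; 0,1,0,0; 0,0,1,0] * matS := by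
  decide

/-- P · sh(3,4) · (E₃⊕I₁) = Ψ·S in ℚ[GL₄(ℤ)],
where sh(3,4) = e+(34)+(234)+(1234). -/
theorem lem_2_1_eq1 :
    emb !![1,0,0,0; -1,1,0,0; 0,-1,1,0; 0,0,-1,1]
        * (emb 1 + emb (pm (Equiv.swap 2 3)) + emb (pm c234) + emb (pm c1234))
        * emb !![1,0,0,0; 1,1,0,0; 1,1,1,0; 0,0,0,1]
      = Psi * emb !![1,0,0,0; 0,1,0,0; 0,0,1,0; -1,-1,-1,1] := by
  simp only [Psi, mul_add, add_mul, ← emb_mul, mul_one, one_mul, matP_mul_matE,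
    matP_mul_pm_swap_mul_matE, matP_mul_pm_c234_mul_matE, matP_mul_pm_c1234_mul_matE]
end

section
/- In the group ring ℚ[GL₄(ℤ)], with P = [[1,0,0,0],[-1,1,0,0],[0,-1,1,0],[0,0,-1,1]], R = [[1,0,0,0],[0,1,0,0],[-1,-1,1,0],[0,0,0,1]], Φ = I + [[1,0,0,0],[0,1,1,0],[0,0,-1,0],[0,0,1,1]] + [[1,1,1,0],[0,-1,-1,0],[0,1,0,0],[0,0,1,1]], and sh(2,3) = e+(23)+(123) viewed in S₄ (fixing 4), one has P · sh(2,3) · (E₂⊕E₂) = Φ·R, where E₂ = [[1,0],[1,1]] and E₂⊕E₂ = [[1,0,0,0],[1,1,0,0],[0,0,1,0],[0,0,1,1]]. -/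
/-- The 3-cycle (123) (on Fin 4: 0↦1↦2↦0, fixing 3). -/
def c123 : Equiv.Perm (Fin 4) := Equiv.swap 0 1 * Equiv.swap 1 2

theorem emb_mul_emb (A B : M4) : emb A * emb B = emb (A * B) := by
  rw [emb, emb, emb, MonoidAlgebra.single_mul_single, one_mul]

/-- P · sh(2,3) · (E₂⊕E₂) = Φ·R in ℚ[GL₄(ℤ)], where sh(2,3) = e+(23)+(123)
viewed in S₄ fixing 4. -/
theorem lem_2_1_eq2 :
    emb !![1,0,0,0; -1,1,0,0; 0,-1,1,0; 0,0,-1,1]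
        * (emb 1 + emb (pm (Equiv.swap 1 2)) + emb (pm c123))
        * emb !![1,0,0,0; 1,1,0,0; 0,0,1,0; 0,0,1,1]
      = Phi * emb !![1,0,0,0; 0,1,0,0; -1,-1,1,0; 0,0,0,1] := by
  simp only [Phi, mul_add, add_mul, emb_mul_emb]
  -- the three terms of sh(2,3) match the three terms of Φ, in order
  congr 1
  · congr 1 <;> exact congrArg emb (by decide)
  · exact congrArg emb (by decide)
end
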